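/- Let S be a group-bound inverse semigroup and x, y ∈ S. Then the following conditions are equivalent: (a) x ∼ y; (b) x ≈ y; (c) there exists z ∈ S such that z = a·x = b·y for some a, b ∈ S¹. -/

import Mathlib

/-!
If `x = u v` and `y = v u`, then `g = v e_x` satisfies `g⁻¹ g = e_x`, `g g⁻¹ = e_y` and
`g x g⁻¹ = y e_y`. Such conjugacies of group parts compose, so every `x ∼ y` yields one, and it
gives the common value `x e_x = e_x · x = g⁻¹ · y`.

Conversely each step `y = a · x` is a conjugacy: `y ∼ₚ x a⁻¹a`, and since `a⁻¹a ≥ e_x` forces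
`(x a⁻¹a) ^ n = x ^ n`, both `x a⁻¹a` and `x` are conjugate to `x e_x` along the chain
`w ∼ₚ w⁻¹ w² ∼ₚ (w²)⁻¹ w³ ∼ₚ ⋯`, whose `n`-th term is `e_w w` once `w ^ n` lies in a subgroup.
-/

namespace SgConjPaper

/-- `spow x n = x^(n+1)`: positive powers of an element of a semigroup. -/
def spow {S : Type*} [Semigroup S] (x : S) : ℕ → S
  | 0 => x
  | n + 1 => spow x n * x

/-- `a` lies in the maximal subgroup of `S` whose identity is the idempotent
`e` (i.e. `e` is a two-sided identity for `a` and `a` is invertible over `e`). -/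
def InMaxSubgroup {S : Type*} [Semigroup S] (e a : S) : Prop :=
  e * a = a ∧ a * e = a ∧ ∃ b : S, e * b = b ∧ b * e = b ∧ a * b = e ∧ b * a = e

/-- `e` is the idempotent `e_x`: the identity of the maximal subgroup
containing some positive power of `x`. -/
def IsEIdem {S : Type*} [Semigroup S] (x e : S) : Prop :=
  ∃ k : ℕ, InMaxSubgroup e (spow x k)

/-- A semigroup is group-bound if some positive power of every element lies
in a subgroup. -/
def GroupBound (S : Type*) [Semigroup S] : Prop := ∀ x : S, ∃ e : S, IsEIdem x e

/-- Primary conjugacy: `x = uv`, `y = vu` for some `u, v ∈ S¹`. -/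
def PrimConj {S : Type*} [Semigroup S] (x y : S) : Prop :=
  ∃ u v : WithOne S, (x : WithOne S) = u * v ∧ (y : WithOne S) = v * u

/-- Conjugacy `∼`: the transitive closure of primary conjugacy. -/
def SgConj {S : Type*} [Semigroup S] : S → S → Prop := Relation.TransGen PrimConj

/-- Conjugacy in the character sense `≡`: equal traces under every
finite-dimensional complex representation. -/
def CharEq {S : Type*} [Semigroup S] (x y : S) : Prop :=
  ∀ (V : Type) (_ : AddCommGroup V) (_ : Module ℂ V) (_ : FiniteDimensional ℂ V)
    (φ : S →ₙ* Module.End ℂ V),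
    LinearMap.trace ℂ V (φ x) = LinearMap.trace ℂ V (φ y)

/-- A semigroup is regular if for every `a` there is `b` with `a = aba`. -/
def Regular (S : Type*) [Semigroup S] : Prop := ∀ a : S, ∃ b : S, a * b * a = a

/-- `inv` makes `S` an inverse semigroup: `inv a` is the unique inverse of
each element `a`. -/
def IsInverseSemigroup (S : Type*) [Semigroup S] (inv : S → S) : Prop :=
  (∀ a : S, a * inv a * a = a) ∧ (∀ a : S, inv a * a * inv a = inv a) ∧
  (∀ a b : S, a * b * a = a → b * a * b = b → b = inv a)

open Classical in
/-- Extension of the inverse map to `S¹ = WithOne S` (with `1⁻¹ = 1`). -/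
noncomputable def inv₁ {S : Type*} [Semigroup S] (inv : S → S) (a : WithOne S) :
    WithOne S :=
  if h : a = 1 then 1 else ((inv (WithOne.unone h) : S) : WithOne S)

/-- The natural partial order on `S¹`: `a ≥ b` iff `b = a e` for some
idempotent `e`. -/
def NatGe {S : Type*} [Semigroup S] (a b : WithOne S) : Prop :=
  ∃ f : WithOne S, f * f = f ∧ b = a * f

/-- The partial action of `S¹` on `S`: `ActsTo inv a x y` says that `a · x` is
defined (i.e. `a⁻¹ a ≥ e_x`) and that its value `a x a⁻¹` equals `y`. -/
def ActsTo {S : Type*} [Semigroup S] (inv : S → S) (a : WithOne S) (x y : S) : Prop :=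
  (∃ e : S, IsEIdem x e ∧ NatGe (inv₁ inv a * a) (e : WithOne S)) ∧
  (y : WithOne S) = a * (x : WithOne S) * inv₁ inv a

/-- `x ≈_p y`: `y = a · x` or `x = a · y` for some `a ∈ S¹`. -/
def ActConjP {S : Type*} [Semigroup S] (inv : S → S) (x y : S) : Prop :=
  ∃ a : WithOne S, ActsTo inv a x y ∨ ActsTo inv a y x

/-- `≈`, conjugacy in the action sense: the transitive closure of `≈_p`. -/
def ActConj {S : Type*} [Semigroup S] (inv : S → S) : S → S → Prop :=
  Relation.TransGen (ActConjP inv)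

section InverseSemigroup

variable {T : Type*} [Semigroup T] {J : T → T}

theorem inv_inv (hJ : IsInverseSemigroup T J) (a : T) : J (J a) = a :=
  (hJ.2.2 _ _ (hJ.2.1 a) (hJ.1 a)).symm

theorem inv_eq_self_of_isIdempotentElem (hJ : IsInverseSemigroup T J) {e : T}
    (he : IsIdempotentElem e) : J e = e :=
  (hJ.2.2 e e (by rw [he.eq, he.eq]) (by rw [he.eq, he.eq])).symm

theorem isIdempotentElem_mul_inv (hJ : IsInverseSemigroup T J) (a : T) :
    IsIdempotentElem (a * J a) := by
  rw [IsIdempotentElem, ← mul_assoc, hJ.1]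

theorem isIdempotentElem_inv_mul (hJ : IsInverseSemigroup T J) (a : T) :
    IsIdempotentElem (J a * a) := by
  rw [IsIdempotentElem, ← mul_assoc, hJ.2.1]

/-- With `x = J (e * f)`, the element `f * x * e` is again an inverse of `e * f`, so it equals
`x`; this makes `x` idempotent, hence `e * f = J x = x`. -/
theorem isIdempotentElem_mul (hJ : IsInverseSemigroup T J) {e f : T}
    (he : IsIdempotentElem e) (hf : IsIdempotentElem f) : IsIdempotentElem (e * f) := by
  set x := J (e * f)
  have h₁ : e * f * x * (e * f) = e * f := hJ.1 _
  have h₂ : x * (e * f) * x = x := hJ.2.1 _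
  have hfxe : f * x * e = x := by
    refine hJ.2.2 _ _ ?_ ?_
    · calc e * f * (f * x * e) * (e * f) = e * (f * f) * x * (e * e) * f := by
            simp only [mul_assoc]
        _ = e * f := by rw [hf.eq, he.eq]; simpa only [mul_assoc] using h₁
    · calc f * x * e * (e * f) * (f * x * e) = f * (x * (e * e * (f * f)) * x) * e := by
            simp only [mul_assoc]
        _ = f * x * e := by rw [he.eq, hf.eq, h₂, mul_assoc]
  have hxe : x * e = x := by rw [← hfxe, mul_assoc, he.eq]
  have hfx : f * x = x := by rw [← hfxe, ← mul_assoc, ← mul_assoc, hf.eq]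
  have hx : IsIdempotentElem x := by
    calc x * x = x * e * (f * x) := by rw [hxe, hfx]
      _ = x := by simpa only [mul_assoc] using h₂
  rw [← inv_inv hJ (e * f), inv_eq_self_of_isIdempotentElem hJ hx]
  exact hx

theorem commute_of_isIdempotentElem (hJ : IsInverseSemigroup T J) {e f : T}
    (he : IsIdempotentElem e) (hf : IsIdempotentElem f) : Commute e f := by
  have hef := isIdempotentElem_mul hJ he hf
  have hfe := isIdempotentElem_mul hJ hf he
  have hinv : f * e = J (e * f) := by
    refine hJ.2.2 _ _ ?_ ?_
    · calc e * f * (f * e) * (e * f) = e * (f * f) * (e * e) * f := by simp only [mul_assoc]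
        _ = e * f := by rw [hf.eq, he.eq]; simpa only [mul_assoc] using hef.eq
    · calc f * e * (e * f) * (f * e) = f * (e * e) * (f * f) * e := by simp only [mul_assoc]
        _ = f * e := by rw [hf.eq, he.eq]; simpa only [mul_assoc] using hfe.eq
  exact (hinv.trans (inv_eq_self_of_isIdempotentElem hJ hef)).symm

theorem inv_mul (hJ : IsInverseSemigroup T J) (a b : T) : J (a * b) = J b * J a := by
  have hc : Commute (b * J b) (J a * a) :=
    commute_of_isIdempotentElem hJ (isIdempotentElem_mul_inv hJ b) (isIdempotentElem_inv_mul hJ a)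
  refine (hJ.2.2 _ _ ?_ ?_).symm
  · calc a * b * (J b * J a) * (a * b) = a * ((b * J b) * (J a * a)) * b := by
          simp only [mul_assoc]
      _ = a * J a * a * (b * J b * b) := by rw [hc.eq]; simp only [mul_assoc]
      _ = a * b := by rw [hJ.1, hJ.1]
  · calc J b * J a * (a * b) * (J b * J a) = J b * ((J a * a) * (b * J b)) * J a := by
          simp only [mul_assoc]
      _ = J b * b * J b * (J a * a * J a) := by rw [← hc.eq]; simp only [mul_assoc]
      _ = J b * J a := by rw [hJ.2.1, hJ.2.1]

theorem mul_inv_mul_of_eq_mul (hJ : IsInverseSemigroup T J) {p q v : T} (h : p = q * v) :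
    p * (J v * v) = p := by
  rw [h, mul_assoc, ← mul_assoc v, hJ.1]

theorem isIdempotentElem_inv_mul_mul (hJ : IsInverseSemigroup T J) {f : T}
    (hf : IsIdempotentElem f) (c : T) : IsIdempotentElem (J c * f * c) := by
  have hc := commute_of_isIdempotentElem hJ hf (isIdempotentElem_mul_inv hJ c)
  calc J c * f * c * (J c * f * c) = J c * (f * (c * J c)) * f * c := by simp only [mul_assoc]
    _ = J c * c * J c * (f * f) * c := by rw [hc.eq]; simp only [mul_assoc]
    _ = J c * f * c := by rw [hJ.2.1, hf.eq]

theorem mul_eq_mul_inv_mul_mul (hJ : IsInverseSemigroup T J) {f : T}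
    (hf : IsIdempotentElem f) (c : T) : f * c = c * (J c * f * c) := by
  have hc := commute_of_isIdempotentElem hJ hf (isIdempotentElem_mul_inv hJ c)
  calc f * c = f * (c * J c) * c := by rw [mul_assoc, hJ.1]
    _ = c * (J c * f * c) := by rw [hc.eq]; simp only [mul_assoc]

end InverseSemigroup

namespace InMaxSubgroup

section Semigroup

variable {T : Type*} [Semigroup T] {e a : T}

theorem isIdempotentElem (h : InMaxSubgroup e a) : IsIdempotentElem e := by
  obtain ⟨hea, -, b, -, -, hab, -⟩ := h
  rw [IsIdempotentElem]
  nth_rewrite 2 [← hab]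
  rw [← mul_assoc, hea, hab]

theorem commute {x : T} (h : InMaxSubgroup e a) (hax : Commute a x) : Commute e x := by
  obtain ⟨hea, hae, b, -, -, hab, hba⟩ := h
  have hex : e * x = b * x * a := by rw [← hba, mul_assoc, hax.eq, mul_assoc]
  have hxe : x * e = a * x * b := by rw [← hab, ← mul_assoc, ← hax.eq]
  have hl : e * x * e = x * e := by rw [mul_assoc, hxe, ← mul_assoc, ← mul_assoc, hea]
  have hr : e * x * e = e * x := by rw [hex, mul_assoc, hae]
  exact hr.symm.trans hl

theorem mul {a' : T} (h : InMaxSubgroup e a) (h' : InMaxSubgroup e a') :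
    InMaxSubgroup e (a * a') := by
  obtain ⟨hea, hae, b, heb, hbe, hab, hba⟩ := h
  obtain ⟨hea', hae', b', heb', hbe', hab', hba'⟩ := h'
  refine ⟨by rw [← mul_assoc, hea], by rw [mul_assoc, hae'], b' * b, by rw [← mul_assoc, heb'],
    by rw [mul_assoc, hbe], ?_, ?_⟩
  · rw [mul_assoc, ← mul_assoc a', hab', heb, hab]
  · rw [mul_assoc, ← mul_assoc b, hba, hea', hba']

/-- In an inverse semigroup the group inverse of `a` in `H_e` is its semigroup inverse. -/
theorem inv_mul_self {J : T → T} (hJ : IsInverseSemigroup T J) (h : InMaxSubgroup e a) :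
    J a * a = e := by
  obtain ⟨hea, -, b, heb, -, hab, hba⟩ := h
  rw [← hJ.2.2 a b (by rw [hab, hea]) (by rw [hba, heb]), hba]

theorem mul_inv_self {J : T → T} (hJ : IsInverseSemigroup T J) (h : InMaxSubgroup e a) :
    a * J a = e := by
  obtain ⟨hea, -, b, heb, -, hab, hba⟩ := h
  rw [← hJ.2.2 a b (by rw [hab, hea]) (by rw [hba, heb]), hab]

end Semigroup

section Monoid

variable {M : Type*} [Monoid M] {e a : M}

theorem pow (h : InMaxSubgroup e a) {n : ℕ} (hn : n ≠ 0) : InMaxSubgroup e (a ^ n) := by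
  induction n with
  | zero => exact absurd rfl hn
  | succ n ih =>
    rcases eq_or_ne n 0 with rfl | hn'
    · rwa [pow_one]
    · rw [pow_succ]; exact (ih hn').mul h

theorem commute_self {x : M} {n : ℕ} (h : InMaxSubgroup e (x ^ n)) : Commute e x :=
  h.commute (Commute.self_pow x n).symm

/-- `e_x` is well defined: both idempotents are `J (x ^ (m * n)) * x ^ (m * n)`. -/
theorem eq_of_pow {J : M → M} (hJ : IsInverseSemigroup M J) {x e' : M} {m n : ℕ}
    (hm : m ≠ 0) (hn : n ≠ 0) (h : InMaxSubgroup e (x ^ m)) (h' : InMaxSubgroup e' (x ^ n)) :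
    e = e' := by
  have hmn : InMaxSubgroup e (x ^ (m * n)) := by rw [pow_mul]; exact h.pow hn
  have hmn' : InMaxSubgroup e' (x ^ (m * n)) := by rw [mul_comm, pow_mul]; exact h'.pow hm
  rw [← hmn.inv_mul_self hJ, hmn'.inv_mul_self hJ]

end Monoid

end InMaxSubgroup

/-- The idempotents `J (a ^ n) * a ^ n` commute with `a * J a`; this is the step of the chain of
primary conjugacies `a ∼ₚ J a * a ^ 2 ∼ₚ J (a ^ 2) * a ^ 3 ∼ₚ ⋯`. -/
theorem mul_inv_pow_succ_mul_pow_succ {M : Type*} [Monoid M] {J : M → M}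
    (hJ : IsInverseSemigroup M J) (a : M) (n : ℕ) :
    a * (J (a ^ (n + 1)) * a ^ (n + 1)) = J (a ^ n) * a ^ n * a := by
  have hc := commute_of_isIdempotentElem hJ (isIdempotentElem_mul_inv hJ a)
    (isIdempotentElem_inv_mul hJ (a ^ n))
  calc a * (J (a ^ (n + 1)) * a ^ (n + 1)) = a * J a * (J (a ^ n) * a ^ n) * a := by
        rw [pow_succ, inv_mul hJ]; simp only [mul_assoc]
    _ = J (a ^ n) * a ^ n * (a * J a * a) := by rw [hc.eq]; simp only [mul_assoc]
    _ = J (a ^ n) * a ^ n * a := by rw [hJ.1]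

section PrimaryConjugates

variable {M : Type*} [Monoid M] {J : M → M} {x y u v e f : M} {n : ℕ}

theorem InMaxSubgroup.mul_inv_mul_eq_of_eq_mul (hJ : IsInverseSemigroup M J) (hx : x = u * v)
    (he : InMaxSubgroup e (x ^ (n + 1))) : e * (J v * v) = e := by
  refine mul_inv_mul_of_eq_mul hJ (q := J (x ^ (n + 1)) * x ^ n * u) ?_
  rw [← he.inv_mul_self hJ, mul_assoc _ u v, ← hx, mul_assoc, ← pow_succ]

/-- The idempotent `v e_x v⁻¹` is fixed by `e_y`, as `v e_x = y ^ (n + 1) v (x ^ (n + 1))⁻¹`, and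
it fixes `e_y`, as it fixes `y ^ (n + 2) = v x ^ (n + 1) u`, a left factor of `e_y`. -/
theorem mul_mul_inv_eq_of_eq_mul (hJ : IsInverseSemigroup M J) (hx : x = u * v)
    (hy : y = v * u) (he : InMaxSubgroup e (x ^ (n + 1))) (hf : InMaxSubgroup f (y ^ (n + 1))) :
    v * e * J v = f := by
  have hvx : ∀ m : ℕ, v * x ^ m = y ^ m * v :=
    (show SemiconjBy v x y by rw [SemiconjBy, hx, hy, mul_assoc]).pow_right
  have hee := he.isIdempotentElem
  have hp : IsIdempotentElem (v * e * J v) := by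
    have h := isIdempotentElem_mul_inv hJ (v * e)
    rwa [inv_mul hJ, inv_eq_self_of_isIdempotentElem hJ hee, ← mul_assoc, mul_assoc v e e,
      hee.eq] at h
  have hcomm := commute_of_isIdempotentElem hJ hf.isIdempotentElem hp
  have hfp : f * (v * e * J v) = v * e * J v := by
    calc f * (v * e * J v) = f * y ^ (n + 1) * (v * J (x ^ (n + 1))) * J v := by
          rw [← he.mul_inv_self hJ, ← mul_assoc v, hvx]; simp only [mul_assoc]
      _ = v * e * J v := by
          rw [hf.1, ← mul_assoc, ← hvx, mul_assoc v, he.mul_inv_self hJ]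
  have hyy : y ^ (n + 1) * y = v * x ^ (n + 1) * u := by
    calc y ^ (n + 1) * y = y ^ (n + 1) * (v * u) := by rw [← hy]
      _ = v * x ^ (n + 1) * u := by rw [← mul_assoc, hvx]
  have hpy : v * e * J v * (v * x ^ (n + 1) * u) = v * x ^ (n + 1) * u := by
    calc v * e * J v * (v * x ^ (n + 1) * u) = v * (e * (J v * v)) * x ^ (n + 1) * u := by
          simp only [mul_assoc]
      _ = v * x ^ (n + 1) * u := by
          rw [he.mul_inv_mul_eq_of_eq_mul hJ hx, mul_assoc v e, he.1]
  have hf₂ : InMaxSubgroup f (y ^ (n + 1) * y * y ^ n) := by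
    rw [mul_assoc, ← pow_succ']; exact hf.mul hf
  have hpf : v * e * J v * f = f := by
    rw [← hf₂.mul_inv_self hJ, ← mul_assoc, ← mul_assoc, hyy, hpy]
  rw [← hfp, hcomm.eq, hpf]

theorem exists_conj_of_eq_mul (hJ : IsInverseSemigroup M J) {N : ℕ} (hN : N ≠ 0)
    (hx : x = u * v) (hy : y = v * u) (he : InMaxSubgroup e (x ^ N))
    (hf : InMaxSubgroup f (y ^ N)) :
    ∃ g, J g * g = e ∧ g * J g = f ∧ g * x * J g = y * f := by
  obtain ⟨n, rfl⟩ := Nat.exists_eq_succ_of_ne_zero hN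
  have hee := he.isIdempotentElem
  have hJg : J (v * e) = e * J v := by rw [inv_mul hJ, inv_eq_self_of_isIdempotentElem hJ hee]
  have hvef := mul_mul_inv_eq_of_eq_mul hJ hx hy he hf
  refine ⟨v * e, ?_, ?_, ?_⟩
  · rw [hJg, mul_assoc, ← mul_assoc (J v), ← mul_assoc e, he.mul_inv_mul_eq_of_eq_mul hJ hx, hee.eq]
  · rw [hJg, ← mul_assoc, mul_assoc v, hee.eq, hvef]
  · calc v * e * x * J (v * e) = v * (e * x) * (e * J v) := by rw [hJg]; simp only [mul_assoc]
      _ = v * x * (e * e) * J v := by rw [he.commute_self.eq]; simp only [mul_assoc]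
      _ = y * f := by rw [hee.eq, ← hvef, hx, hy]; simp only [mul_assoc]

end PrimaryConjugates

section NaturalOrder

variable {S : Type*} [Semigroup S] {J : WithOne S → WithOne S}

theorem natGe_refl (a : WithOne S) : NatGe a a := ⟨1, one_mul 1, (mul_one a).symm⟩

theorem natGe_one {h : WithOne S} (hh : IsIdempotentElem h) : NatGe 1 h := ⟨h, hh, (one_mul h).symm⟩

theorem NatGe.mul (hJ : IsInverseSemigroup (WithOne S) J) {a b c d : WithOne S}
    (hab : NatGe a b) (hcd : NatGe c d) : NatGe (a * c) (b * d) := by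
  obtain ⟨f, hf, rfl⟩ := hab
  obtain ⟨g, hg, rfl⟩ := hcd
  refine ⟨J c * f * c * g, isIdempotentElem_mul hJ (isIdempotentElem_inv_mul_mul hJ hf c) hg, ?_⟩
  calc a * f * (c * g) = a * (f * c) * g := by simp only [mul_assoc]
    _ = a * c * (J c * f * c * g) := by rw [mul_eq_mul_inv_mul_mul hJ hf]; simp only [mul_assoc]

theorem NatGe.pow (hJ : IsInverseSemigroup (WithOne S) J) {a b : WithOne S} (h : NatGe a b)
    (n : ℕ) : NatGe (a ^ n) (b ^ n) := by
  induction n with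
  | zero => exact natGe_refl 1
  | succ n ih => rw [pow_succ, pow_succ]; exact ih.mul hJ h

theorem NatGe.antisymm (hJ : IsInverseSemigroup (WithOne S) J) {a b : WithOne S}
    (hab : NatGe a b) (hba : NatGe b a) : a = b := by
  obtain ⟨f, hf, rfl⟩ := hab
  obtain ⟨g, hg, hag⟩ := hba
  have hgf := commute_of_isIdempotentElem hJ hg hf
  symm
  calc a * f = a * f * g * f := by nth_rewrite 1 [hag]; rfl
    _ = a * (f * f) * g := by rw [mul_assoc (a * f), hgf.eq]; simp only [mul_assoc]
    _ = a := by rw [hf, ← hag]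

/-- `x * e ≤ x * h ≤ x` and `(x * e) ^ n = x ^ n`, so `(x * h) ^ n` is squeezed to `x ^ n`. -/
theorem pow_mul_eq_pow_of_natGe (hJ : IsInverseSemigroup (WithOne S) J) {x e h : WithOne S}
    {n : ℕ} (hx : InMaxSubgroup e (x ^ n)) (hh : IsIdempotentElem h) (hhe : NatGe h e) :
    (x * h) ^ n = x ^ n := by
  have hxe : (x * e) ^ n = x ^ n := by
    rw [hx.commute_self.symm.mul_pow]
    cases n with
    | zero => simp
    | succ n => rw [hx.isIdempotentElem.pow_succ_eq, hx.2.1]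
  have hle : NatGe (x * h) (x * e) := (natGe_refl x).mul hJ hhe
  have hge : NatGe x (x * h) := by simpa using (natGe_refl x).mul hJ (natGe_one hh)
  refine (NatGe.antisymm hJ (hge.pow hJ n) ?_).symm
  rw [← hxe]
  exact hle.pow hJ n

end NaturalOrder

section WithOne

variable {S : Type*} [Semigroup S] {inv : S → S}

@[simp]
theorem inv₁_one : inv₁ inv (1 : WithOne S) = 1 := dif_pos rfl

@[simp]
theorem inv₁_coe (s : S) : inv₁ inv (s : WithOne S) = (inv s : WithOne S) := by
  rw [inv₁, dif_neg WithOne.coe_ne_one, WithOne.unone_coe]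

theorem IsInverseSemigroup.withOne (hinv : IsInverseSemigroup S inv) :
    IsInverseSemigroup (WithOne S) (inv₁ inv) := by
  refine ⟨fun a ↦ ?_, fun a ↦ ?_, fun a b h₁ h₂ ↦ ?_⟩
  · induction a using WithOne.recOneCoe with
    | one => simp
    | coe s => simp only [inv₁_coe, ← WithOne.coe_mul, hinv.1]
  · induction a using WithOne.recOneCoe with
    | one => simp
    | coe s => simp only [inv₁_coe, ← WithOne.coe_mul, hinv.2.1]
  · induction a using WithOne.recOneCoe with
    | one => simpa using h₁
    | coe s =>
      induction b using WithOne.recOneCoe with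
      | one => simp at h₂
      | coe t =>
        simp only [← WithOne.coe_mul, WithOne.coe_inj] at h₁ h₂
        rw [inv₁_coe, hinv.2.2 s t h₁ h₂]

theorem exists_coe_eq_mul_coe (m : WithOne S) (s : S) : ∃ t : S, (t : WithOne S) = m * s := by
  induction m using WithOne.recOneCoe with
  | one => exact ⟨s, (one_mul _).symm⟩
  | coe a => exact ⟨a * s, WithOne.coe_mul a s⟩

theorem exists_coe_eq_coe_mul (s : S) (m : WithOne S) : ∃ t : S, (t : WithOne S) = s * m := by
  induction m using WithOne.recOneCoe with
  | one => exact ⟨s, (mul_one _).symm⟩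
  | coe a => exact ⟨s * a, WithOne.coe_mul s a⟩

theorem coe_spow (x : S) (k : ℕ) : ((spow x k : S) : WithOne S) = (x : WithOne S) ^ (k + 1) := by
  induction k with
  | zero => rw [pow_one]; rfl
  | succ k ih => rw [spow, WithOne.coe_mul, ih, ← pow_succ]

theorem InMaxSubgroup.coe {e a : S} (h : InMaxSubgroup e a) :
    InMaxSubgroup (e : WithOne S) (a : WithOne S) := by
  obtain ⟨h₁, h₂, b, h₃, h₄, h₅, h₆⟩ := h
  exact ⟨by rw [← WithOne.coe_mul, h₁], by rw [← WithOne.coe_mul, h₂], b,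
    by rw [← WithOne.coe_mul, h₃], by rw [← WithOne.coe_mul, h₄], by rw [← WithOne.coe_mul, h₅],
    by rw [← WithOne.coe_mul, h₆]⟩

theorem IsEIdem.exists_pow {x e : S} (h : IsEIdem x e) :
    ∃ n ≠ 0, InMaxSubgroup (e : WithOne S) ((x : WithOne S) ^ n) := by
  obtain ⟨k, hk⟩ := h
  exact ⟨k + 1, k.succ_ne_zero, coe_spow x k ▸ hk.coe⟩

theorem IsEIdem.unique (hinv : IsInverseSemigroup S inv) {x e e' : S} (h : IsEIdem x e)
    (h' : IsEIdem x e') : e = e' := by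
  obtain ⟨m, hm, hem⟩ := h.exists_pow
  obtain ⟨n, hn, hen⟩ := h'.exists_pow
  exact WithOne.coe_inj.1 (InMaxSubgroup.eq_of_pow hinv.withOne hm hn hem hen)

end WithOne

section Conjugacy

variable {S : Type*} [Semigroup S] {inv : S → S}

theorem SgConj.refl (x : S) : SgConj x x :=
  .single ⟨1, x, (one_mul _).symm, (mul_one _).symm⟩

theorem SgConj.symm {x y : S} (h : SgConj x y) : SgConj y x :=
  Relation.TransGen.mono (r := Function.swap PrimConj)
    (fun _ _ ⟨u, v, h₁, h₂⟩ ↦ ⟨v, u, h₂, h₁⟩) _ _ (Relation.TransGen.swap _ _ h)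

theorem sgConj_of_coe_eq_inv_pow_mul_pow_mul {J : WithOne S → WithOne S}
    (hJ : IsInverseSemigroup (WithOne S) J) (w : S) (n : ℕ) {z : S}
    (hz : (z : WithOne S) = J ((w : WithOne S) ^ n) * (w : WithOne S) ^ n * w) : SgConj w z := by
  induction n generalizing z with
  | zero =>
    rw [pow_zero, inv_eq_self_of_isIdempotentElem hJ IsIdempotentElem.one, one_mul, one_mul,
      WithOne.coe_inj] at hz
    exact hz ▸ SgConj.refl w
  | succ n ih =>
    obtain ⟨z', hz'⟩ := exists_coe_eq_mul_coe (J ((w : WithOne S) ^ n) * (w : WithOne S) ^ n) w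
    exact .tail (ih hz') ⟨w, J ((w : WithOne S) ^ (n + 1)) * (w : WithOne S) ^ (n + 1),
      hz'.trans (mul_inv_pow_succ_mul_pow_succ hJ _ n).symm, hz⟩

theorem ActsTo.sgConj (hinv : IsInverseSemigroup S inv) {a : WithOne S} {x y : S}
    (h : ActsTo inv a x y) : SgConj x y := by
  have hJ := hinv.withOne
  obtain ⟨⟨e, hxe, hle⟩, hy⟩ := h
  obtain ⟨n, -, hen⟩ := hxe.exists_pow
  have hh := isIdempotentElem_inv_mul hJ a
  have heh : (e : WithOne S) * (inv₁ inv a * a) = e := by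
    obtain ⟨f, -, hf⟩ := hle
    rw [(commute_of_isIdempotentElem hJ hen.isIdempotentElem hh).eq, hf, ← mul_assoc, hh.eq]
  obtain ⟨w, hw⟩ := exists_coe_eq_coe_mul x (inv₁ inv a * a)
  have hyw : PrimConj y w := ⟨a, x * inv₁ inv a, by rw [hy, mul_assoc], by rw [hw, mul_assoc]⟩
  have hwe : SgConj w (x * e) := by
    refine sgConj_of_coe_eq_inv_pow_mul_pow_mul hJ w n ?_
    rw [hw, pow_mul_eq_pow_of_natGe hJ hen hh hle, hen.inv_mul_self hJ, WithOne.coe_mul,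
      ← mul_assoc, hen.commute_self.eq, mul_assoc, heh]
  have hxe : SgConj x (x * e) := by
    refine sgConj_of_coe_eq_inv_pow_mul_pow_mul hJ x n ?_
    rw [hen.inv_mul_self hJ, WithOne.coe_mul, hen.commute_self.eq]
  exact Relation.TransGen.trans hxe
    (Relation.TransGen.trans hwe.symm (SgConj.symm (.single hyw)))

/-- Since `g x g⁻¹ = g (x e_x) g⁻¹`, this says that the group parts `x e_x` and `y e_y` are
conjugate by some `g ∈ S¹` with `g⁻¹ g = e_x` and `g g⁻¹ = e_y`. -/
def DConj (inv : S → S) (x y : S) : Prop :=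
  ∃ e f : S, IsEIdem x e ∧ IsEIdem y f ∧ ∃ g : WithOne S,
    inv₁ inv g * g = e ∧ g * inv₁ inv g = f ∧ g * x * inv₁ inv g = y * f

theorem DConj.of_primConj (hinv : IsInverseSemigroup S inv) (hGB : GroupBound S) {x y : S}
    (h : PrimConj x y) : DConj inv x y := by
  obtain ⟨u, v, hx, hy⟩ := h
  obtain ⟨e, hxe⟩ := hGB x
  obtain ⟨f, hyf⟩ := hGB y
  obtain ⟨m, hm, hem⟩ := hxe.exists_pow
  obtain ⟨n, hn, hfn⟩ := hyf.exists_pow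
  refine ⟨e, f, hxe, hyf, exists_conj_of_eq_mul hinv.withOne (mul_ne_zero hm hn) hx hy ?_ ?_⟩
  · rw [pow_mul]; exact hem.pow hn
  · rw [mul_comm, pow_mul]; exact hfn.pow hm

theorem DConj.trans (hinv : IsInverseSemigroup S inv) {x y z : S} (hxy : DConj inv x y)
    (hyz : DConj inv y z) : DConj inv x z := by
  have hJ := hinv.withOne
  obtain ⟨e, f, hxe, hyf, g, hg₁, hg₂, hg₃⟩ := hxy
  obtain ⟨f', d, hyf', hzd, g', hg₁', hg₂', hg₃'⟩ := hyz
  obtain rfl := hyf'.unique hinv hyf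
  obtain ⟨_, -, hdn⟩ := hzd.exists_pow
  have hdd := hdn.isIdempotentElem
  refine ⟨e, d, hxe, hzd, g' * g, ?_, ?_, ?_⟩
  · calc inv₁ inv (g' * g) * (g' * g) = inv₁ inv g * (g * inv₁ inv g) * g := by
          rw [inv_mul hJ, mul_assoc, ← mul_assoc _ g', hg₁', ← hg₂]; simp only [mul_assoc]
      _ = e := by rw [← mul_assoc, hJ.2.1, hg₁]
  · calc g' * g * inv₁ inv (g' * g) = g' * (inv₁ inv g' * g') * inv₁ inv g' := by
          rw [inv_mul hJ, mul_assoc, ← mul_assoc g, hg₂, ← hg₁']; simp only [mul_assoc]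
      _ = d := by rw [← mul_assoc, hJ.1, hg₂']
  · calc g' * g * x * inv₁ inv (g' * g) = g' * (y * (inv₁ inv g' * g')) * inv₁ inv g' := by
          rw [inv_mul hJ, hg₁', ← hg₃]; simp only [mul_assoc]
      _ = g' * y * inv₁ inv g' * (g' * inv₁ inv g') := by simp only [mul_assoc]
      _ = z * d := by rw [hg₃', hg₂', mul_assoc, hdd.eq]

theorem SgConj.dConj (hinv : IsInverseSemigroup S inv) (hGB : GroupBound S) {x y : S}
    (h : SgConj x y) : DConj inv x y := by
  induction h with
  | single h => exact .of_primConj hinv hGB h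
  | tail _ h ih => exact ih.trans hinv (.of_primConj hinv hGB h)

/-- The common value is `z = x e_x = e_x · x = g⁻¹ · y`. -/
theorem DConj.exists_actsTo (hinv : IsInverseSemigroup S inv) {x y : S} (h : DConj inv x y) :
    ∃ z : S, ∃ a b : WithOne S, ActsTo inv a x z ∧ ActsTo inv b y z := by
  have hJ := hinv.withOne
  obtain ⟨e, f, hxe, hyf, g, hg₁, hg₂, hg₃⟩ := h
  obtain ⟨_, -, hem⟩ := hxe.exists_pow
  have hee := hem.isIdempotentElem
  have hJe : inv₁ inv (e : WithOne S) = e := inv_eq_self_of_isIdempotentElem hJ hee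
  have hxe_eq : ((x * e : S) : WithOne S) = e * x * e := by
    rw [WithOne.coe_mul, hem.commute_self.eq, mul_assoc, hee.eq]
  refine ⟨x * e, e, inv₁ inv g, ⟨⟨e, hxe, ?_⟩, ?_⟩, ⟨⟨f, hyf, ?_⟩, ?_⟩⟩
  · rw [hJe, hee.eq]; exact natGe_refl _
  · rw [hJe, hxe_eq]
  · rw [inv_inv hJ, hg₂]; exact natGe_refl _
  · rw [inv_inv hJ, hxe_eq, ← hg₁]
    calc inv₁ inv g * g * x * (inv₁ inv g * g) = inv₁ inv g * (g * x * inv₁ inv g) * g := by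
          simp only [mul_assoc]
      _ = inv₁ inv g * y * g := by
          rw [hg₃, mul_assoc, mul_assoc, ← hg₂, hJ.1, mul_assoc]

end Conjugacy

/-- Theorem 2: in a group-bound inverse semigroup the following are
equivalent: (a) `x ∼ y`; (b) `x ≈ y`; (c) `a · x = z = b · y` for some
`z ∈ S` and `a, b ∈ S¹`. -/
theorem conj_iff_actConj {S : Type*} [Semigroup S] (inv : S → S)
    (hinv : IsInverseSemigroup S inv) (hGB : GroupBound S) (x y : S) :
    (SgConj x y ↔ ActConj inv x y) ∧
    (SgConj x y ↔ ∃ z : S, ∃ a b : WithOne S, ActsTo inv a x z ∧ ActsTo inv b y z) := by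
  have hact : ∀ {x y : S}, ActConjP inv x y → SgConj x y := by
    rintro x y ⟨a, h | h⟩
    · exact h.sgConj hinv
    · exact (h.sgConj hinv).symm
  refine ⟨⟨fun h ↦ ?_, fun h ↦ ?_⟩, ⟨fun h ↦ (h.dConj hinv hGB).exists_actsTo hinv, ?_⟩⟩
  · obtain ⟨z, a, b, hxz, hyz⟩ := (h.dConj hinv hGB).exists_actsTo hinv
    exact .tail (.single ⟨a, .inl hxz⟩) ⟨b, .inr hyz⟩
  · exact Relation.TransGen.lift' id (fun _ _ ↦ hact) _ _ h
  · rintro ⟨z, a, b, hxz, hyz⟩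
    exact Relation.TransGen.trans (hxz.sgConj hinv) (hyz.sgConj hinv).symm

end SgConjPaper
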